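/- Let $d=2m+1\ge 5$ and $n\ge k\ge d$, and for $1\le i\le d-1$ define $f_{0,i}(d,k,n)=(i+1)\phi_i(d,k)+(n-k)\left[(i+1)c_i(d,k)+\phi_{i-1}(d-1,k-1)-\alpha_i(d,k)\right]$, with $\phi$, $c$, $\alpha$ as in Dinh's formulas. Then for $i=d-1$ this satisfies $f_{0,d-1}(d,k,n)=2 f_{d-2}(d,k,n)$ where $f_{d-2}(d,k,n)=\phi_{d-2}(d,k)+(n-k)c_{d-2}(d,k)$. -/

import Mathlib

/-- Integer binomial coefficient, zero outside the range `0 ≤ b ≤ a`. -/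
def ch (a b : ℤ) : ℤ := if 0 ≤ b ∧ b ≤ a then ((a.toNat).choose b.toNat : ℤ) else 0

/-- `N(s,t,u)` from Dinh's count of new faces of ordinary polytopes. -/
def N (s t u : ℤ) : ℤ :=
  ch (u - t) t * ch (s - u + t) (u - t) + ch (u - 1 - t) t * ch (s - u + t) (u - 1 - t)

/-- `φ_i(d,k)`: the number of `i`-faces of the cyclic `d`-polytope with `k+1` vertices. -/
def phi (d k : ℕ) (i : ℤ) : ℤ :=
  (∑ j ∈ Finset.range (d / 2 + 1),
      (ch (j : ℤ) ((d : ℤ) - 1 - i) + ch ((d : ℤ) - j) ((d : ℤ) - 1 - i)) *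
        ch ((k : ℤ) - d + j) (j : ℤ))
    - (if Even d then 1 else 0) * ch ((d / 2 : ℕ) : ℤ) (2 * ((d / 2 : ℕ) : ℤ) - 1 - i) *
        ch ((k : ℤ) - (d / 2 : ℕ)) ((d / 2 : ℕ) : ℤ)

/-- `c_i(d,k)` for `d = 2m+1`: the increment of the `i`-th face number of ordinary
polytopes. -/
def cc (m k : ℕ) (i : ℤ) : ℤ :=
  ∑ j ∈ Finset.range m, ch ((m : ℤ) + 1) (i - j) * ch ((k : ℤ) - m - 2) (j : ℤ)

/-- `α_i(d,k)` for `d = 2m+1`: the number of new `i`-faces in Dinh's construction. -/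
def alpha (m k i : ℕ) : ℤ :=
  ∑ j ∈ Finset.Icc (i - m) (i / 2),
    (2 * N ((k : ℤ) - 1) (j : ℤ) (i : ℤ) - N ((k : ℤ) - 2) (j : ℤ) (i : ℤ))

/-! With `d = 2m+1`, every quantity in the identity is a binomial coefficient in `k - m` up to a
shift: the cyclic polytope sums `φ` collapse by the hockey-stick identity, only the top one or two
terms of `c_i` survive, and `α_{d-1}` has a single summand. The identity then reduces to three
applications of Pascal's rule. -/

lemma ch_natCast (a b : ℕ) : ch a b = a.choose b := by
  unfold ch
  split_ifs with h
  · simp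
  · rw [Nat.choose_eq_zero_of_lt (by omega), Nat.cast_zero]

lemma ch_eq_zero_of_lt {a b : ℤ} (h : a < b) : ch a b = 0 := by
  unfold ch
  rw [if_neg (by omega)]

lemma ch_zero_right {a : ℤ} (ha : 0 ≤ a) : ch a 0 = 1 := by
  simp [ch, ha]

lemma ch_one_right {a : ℤ} (ha : 0 ≤ a) : ch a 1 = a := by
  lift a to ℕ using ha
  rw [← Nat.cast_one, ch_natCast, Nat.choose_one_right]

lemma ch_self {a : ℤ} (ha : 0 ≤ a) : ch a a = 1 := by
  lift a to ℕ using ha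
  rw [ch_natCast, Nat.choose_self, Nat.cast_one]

lemma ch_succ_self_right {a : ℤ} (ha : 0 ≤ a) : ch (a + 1) a = a + 1 := by
  lift a to ℕ using ha
  rw [← Nat.cast_succ, ch_natCast, Nat.choose_succ_self_right, Nat.cast_succ]

lemma ch_succ_succ {a b : ℤ} (ha : 0 ≤ a) (hb : 0 ≤ b) :
    ch (a + 1) (b + 1) = ch a b + ch a (b + 1) := by
  lift a to ℕ using ha
  lift b to ℕ using hb
  simp only [← Nat.cast_succ, ch_natCast, Nat.choose_succ_succ, Nat.cast_add]

lemma sum_range_ch_add_self {a : ℤ} (ha : 0 ≤ a) (m : ℕ) :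
    ∑ j ∈ Finset.range (m + 1), ch (a + j) j = ch (a + m + 1) m := by
  lift a to ℕ using ha
  have hsum := Nat.sum_range_add_choose m a
  rw [← Nat.choose_symm_of_eq_add (by ring : m + a + 1 = m + (a + 1))] at hsum
  rw [show (a : ℤ) + m + 1 = ((a + m + 1 : ℕ) : ℤ) by push_cast; ring, ch_natCast,
    show a + m + 1 = m + a + 1 by ring, ← hsum, Nat.cast_sum]
  refine Finset.sum_congr rfl fun j _ => ?_
  rw [← Nat.cast_add, ch_natCast, add_comm a j, Nat.choose_symm_add]

lemma sum_const_mul_ch_add_self {a : ℤ} (ha : 0 ≤ a) (m : ℕ) (w : ℕ → ℤ) (c : ℤ)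
    (hw : ∀ j ∈ Finset.range (m + 1), w j = c) :
    ∑ j ∈ Finset.range (m + 1), w j * ch (a + j) j = c * ch (a + m + 1) m := by
  rw [Finset.sum_congr rfl fun j hj => by rw [hw j hj], ← Finset.mul_sum,
    sum_range_ch_add_self ha]

lemma phi_odd_facet (m k : ℕ) (hk : 2 * m + 1 ≤ k) :
    phi (2 * m + 1) k (2 * m) = 2 * ch (k - m) m := by
  unfold phi
  rw [show (2 * m + 1) / 2 = m by omega, if_neg (by simp), zero_mul, zero_mul,
    sub_zero, sum_const_mul_ch_add_self (by omega) m _ 2,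
    show (k : ℤ) - ↑(2 * m + 1) + m + 1 = k - m by push_cast; ring]
  intro j hj
  have hjm := Finset.mem_range_succ_iff.mp hj
  rw [show ((2 * m + 1 : ℕ) : ℤ) - 1 - 2 * m = 0 by push_cast; ring, ch_zero_right (by omega),
    ch_zero_right (by omega)]
  norm_num

lemma phi_odd_ridge (m k : ℕ) (hk : 2 * m + 1 ≤ k) :
    phi (2 * m + 1) k (2 * m - 1) = (2 * m + 1) * ch (k - m) m := by
  unfold phi
  rw [show (2 * m + 1) / 2 = m by omega, if_neg (by simp), zero_mul, zero_mul, sub_zero,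
    sum_const_mul_ch_add_self (by omega) m _ (2 * m + 1),
    show (k : ℤ) - ↑(2 * m + 1) + m + 1 = k - m by push_cast; ring]
  intro j hj
  have hjm := Finset.mem_range_succ_iff.mp hj
  rw [show ((2 * m + 1 : ℕ) : ℤ) - 1 - (2 * m - 1) = 1 by push_cast; ring,
    ch_one_right (by omega), ch_one_right (by omega)]
  push_cast
  ring

lemma phi_even_facet (m k : ℕ) (hk : 2 * m ≤ k) :
    phi (2 * m) k (2 * m - 1) = 2 * ch (k - m + 1) m - ch (k - m) m := by
  unfold phi
  rw [show 2 * m / 2 = m by omega, if_pos (even_two_mul m), one_mul,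
    sum_const_mul_ch_add_self (by omega) m _ 2,
    show (k : ℤ) - ↑(2 * m) + m + 1 = k - m + 1 by push_cast; ring,
    show 2 * (m : ℤ) - 1 - (2 * m - 1) = 0 by ring, ch_zero_right (by omega), one_mul]
  intro j hj
  have hjm := Finset.mem_range_succ_iff.mp hj
  rw [show ((2 * m : ℕ) : ℤ) - 1 - (2 * m - 1) = 0 by push_cast; ring, ch_zero_right (by omega),
    ch_zero_right (by omega)]
  norm_num

lemma cc_facet (m k : ℕ) (hm : 1 ≤ m) : cc m k (2 * m) = ch (k - m - 2) (m - 1) := by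
  obtain ⟨m, rfl⟩ : ∃ m', m = m' + 1 := ⟨m - 1, by omega⟩
  unfold cc
  rw [Finset.sum_range_succ, Finset.sum_eq_zero fun j hj => ?_, zero_add]
  · rw [show 2 * ((m + 1 : ℕ) : ℤ) - m = (m + 1 : ℕ) + 1 by push_cast; ring,
      ch_self (by omega), one_mul]
    push_cast
    rw [add_sub_cancel_right]
  · have hjm := Finset.mem_range.mp hj
    rw [ch_eq_zero_of_lt (by push_cast; omega), zero_mul]

lemma cc_ridge (m k : ℕ) (hm : 2 ≤ m) :
    cc m k (2 * m - 1) = ch (k - m - 2) (m - 2) + (m + 1) * ch (k - m - 2) (m - 1) := by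
  obtain ⟨m, rfl⟩ : ∃ m', m = m' + 2 := ⟨m - 2, by omega⟩
  unfold cc
  rw [Finset.sum_range_succ, Finset.sum_range_succ, Finset.sum_eq_zero fun j hj => ?_, zero_add]
  · rw [show 2 * ((m + 2 : ℕ) : ℤ) - 1 - m = (m + 2 : ℕ) + 1 by push_cast; ring,
      ch_self (by omega),
      show 2 * ((m + 2 : ℕ) : ℤ) - 1 - (m + 1 : ℕ) = (m + 2 : ℕ) by push_cast; ring,
      ch_succ_self_right (by omega)]
    push_cast
    rw [one_mul, add_sub_cancel_right, show (m : ℤ) + 2 - 1 = m + 1 by ring]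
  · have hjm := Finset.mem_range.mp hj
    rw [ch_eq_zero_of_lt (by push_cast; omega), zero_mul]

lemma N_two_mul_self (s : ℤ) (m : ℕ) : N s m (2 * m) = ch (s - m) m := by
  unfold N
  rw [show (2 * m : ℤ) - m = m by ring, show (2 * m : ℤ) - 1 - m = m - 1 by ring,
    ch_self (by omega), ch_eq_zero_of_lt (a := (m : ℤ) - 1) (b := m) (by omega),
    show s - 2 * m + m = s - m by ring]
  ring

lemma alpha_facet (m k : ℕ) : alpha m k (2 * m) = 2 * ch (k - m - 1) m - ch (k - m - 2) m := by
  unfold alpha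
  rw [show 2 * m - m = m by omega, show 2 * m / 2 = m by omega, Finset.Icc_self,
    Finset.sum_singleton]
  push_cast
  rw [N_two_mul_self, N_two_mul_self, sub_right_comm _ 1, sub_right_comm _ 2]

theorem ordinary_flag_facet_identity_general (d m k n : ℕ) (hd : d = 2 * m + 1) (hd5 : 5 ≤ d)
    (hk : d ≤ k) :
    (d : ℤ) * phi d k ((d : ℤ) - 1) +
        ((n : ℤ) - k) *
          ((d : ℤ) * cc m k ((d : ℤ) - 1) + phi (d - 1) (k - 1) ((d : ℤ) - 2)
            - alpha m k (d - 1))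
      = 2 * (phi d k ((d : ℤ) - 2) + ((n : ℤ) - k) * cc m k ((d : ℤ) - 2)) := by
  subst hd
  have hm : 2 ≤ m := by omega
  rw [show ((2 * m + 1 : ℕ) : ℤ) - 1 = 2 * m by push_cast; ring,
    show ((2 * m + 1 : ℕ) : ℤ) - 2 = 2 * m - 1 by push_cast; ring, Nat.add_sub_cancel,
    phi_odd_facet m k hk, phi_odd_ridge m k hk, phi_even_facet m (k - 1) (by omega),
    cc_facet m k (by omega), cc_ridge m k hm, alpha_facet, Nat.cast_sub (by omega : 1 ≤ k),
    show (k : ℤ) - (1 : ℕ) - m + 1 = k - m by push_cast; ring,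
    show (k : ℤ) - (1 : ℕ) - m = k - m - 1 by push_cast; ring]
  have pascal_top : ch (k - m) m = ch (k - m - 1) (m - 1) + ch (k - m - 1) m := by
    convert ch_succ_succ (a := k - m - 1) (b := m - 1) (by omega) (by omega) using 3 <;> ring
  have pascal_mid : ch (k - m - 1) m = ch (k - m - 2) (m - 1) + ch (k - m - 2) m := by
    convert ch_succ_succ (a := k - m - 2) (b := m - 1) (by omega) (by omega) using 3 <;> ring
  have pascal_low : ch (k - m - 1) (m - 1) = ch (k - m - 2) (m - 2) + ch (k - m - 2) (m - 1) := by
    convert ch_succ_succ (a := k - m - 2) (b := m - 2) (by omega) (by omega) using 3 <;> ring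
  push_cast
  linear_combination ((n : ℤ) - k) * (2 * pascal_top - pascal_mid + 2 * pascal_low)

/-- Consistency of the flag number formula
`f_{0,i}(d,k,n) = (i+1)φ_i(d,k) + (n-k)[(i+1)c_i(d,k) + φ_{i-1}(d-1,k-1) - α_i(d,k)]`
of the ordinary polytope `P^{d,k,n}` at `i = d-1`:
`f_{0,d-1} = 2 f_{d-2}`, where `f_{d-2} = φ_{d-2}(d,k) + (n-k)c_{d-2}(d,k)`. -/
theorem ordinary_flag_facet_identity (d m k n : ℕ) (hd : d = 2 * m + 1) (hd5 : 5 ≤ d)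
    (hk : d ≤ k) (hn : k ≤ n) :
    (d : ℤ) * phi d k ((d : ℤ) - 1) +
        ((n : ℤ) - k) *
          ((d : ℤ) * cc m k ((d : ℤ) - 1) + phi (d - 1) (k - 1) ((d : ℤ) - 2)
            - alpha m k (d - 1))
      = 2 * (phi d k ((d : ℤ) - 2) + ((n : ℤ) - k) * cc m k ((d : ℤ) - 2)) :=
  ordinary_flag_facet_identity_general d m k n hd hd5 hk
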